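/- Let X be a Polish space, M an at most countable partition of X into Borel sets, and μ an atomless Borel probability measure on X. Then there exists a Borel isomorphism Φ : X → X × [0,1] such that for every M ∈ M, Φ_*(μ|_M) = (μ|_M) ⊗ λ, where λ is Lebesgue measure on [0,1]. -/

import Mathlib

/-!
Each piece `μ|_M` and its product `μ|_M ⊗ λ` are finite atomless measures of the same mass on
uncountable standard Borel spaces, so both are isomorphic mod 0 to the same multiple of Lebesgue
measure on `(0,1)`: transport them to `ℝ` by a Borel isomorphism, where the quantile function of
an atomless distribution is an exact right inverse of its distribution function. Gluing these
isomorphisms along the partition gives a Borel map `Ψ : X → X × [0,1]`, injective on a conull set,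
that pushes every `μ|_M` to `μ|_M ⊗ λ`. By Fubini, every conull subset of `X × [0,1]` contains an
uncountable null set inside one vertical fibre; discarding its preimage leaves a conull Borel set
`E` with `Eᶜ` and `(Ψ '' E)ᶜ` both uncountable. By Lusin–Souslin `Ψ` maps `E` isomorphically onto
a Borel set, and a Borel isomorphism `Eᶜ ≃ (Ψ '' E)ᶜ` completes it to a Borel bijection.
-/

open MeasureTheory Set Filter ProbabilityTheory

namespace MeasureTheory

variable {α β γ : Type*} [MeasurableSpace α] [MeasurableSpace β] [MeasurableSpace γ]
  {μ : Measure α} {ν : Measure β} {κ : Measure γ} {f : α → β} {g : β → α}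

structure IsModZeroEquiv (μ : Measure α) (ν : Measure β) (f : α → β) (g : β → α) : Prop where
  measurable : Measurable f
  measurable_inv : Measurable g
  map_eq : μ.map f = ν
  map_inv_eq : ν.map g = μ
  ae_left_inv : ∀ᵐ x ∂μ, g (f x) = x
  ae_right_inv : ∀ᵐ y ∂ν, f (g y) = y

namespace IsModZeroEquiv

theorem symm (h : IsModZeroEquiv μ ν f g) : IsModZeroEquiv ν μ g f :=
  ⟨h.measurable_inv, h.measurable, h.map_inv_eq, h.map_eq, h.ae_right_inv, h.ae_left_inv⟩

theorem ae_comp_left_inv {f' : β → γ} {g' : γ → β} (h : IsModZeroEquiv μ ν f g)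
    (h' : IsModZeroEquiv ν κ f' g') : ∀ᵐ x ∂μ, g (g' (f' (f x))) = x := by
  have h'f : ∀ᵐ x ∂μ, g' (f' (f x)) = f x :=
    ae_of_ae_map h.measurable.aemeasurable (h.map_eq ▸ h'.ae_left_inv)
  filter_upwards [h'f, h.ae_left_inv] with x hx hx' using by rw [hx, hx']

theorem trans {f' : β → γ} {g' : γ → β} (h : IsModZeroEquiv μ ν f g)
    (h' : IsModZeroEquiv ν κ f' g') : IsModZeroEquiv μ κ (f' ∘ f) (g ∘ g') where
  measurable := h'.measurable.comp h.measurable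
  measurable_inv := h.measurable_inv.comp h'.measurable_inv
  map_eq := by rw [← Measure.map_map h'.measurable h.measurable, h.map_eq, h'.map_eq]
  map_inv_eq := by
    rw [← Measure.map_map h.measurable_inv h'.measurable_inv, h'.map_inv_eq, h.map_inv_eq]
  ae_left_inv := h.ae_comp_left_inv h'
  ae_right_inv := h'.symm.ae_comp_left_inv h.symm

theorem smul (h : IsModZeroEquiv μ ν f g) (c : ENNReal) : IsModZeroEquiv (c • μ) (c • ν) f g where
  measurable := h.measurable
  measurable_inv := h.measurable_inv
  map_eq := by rw [Measure.map_smul, h.map_eq]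
  map_inv_eq := by rw [Measure.map_smul, h.map_inv_eq]
  ae_left_inv := Measure.ae_smul_measure h.ae_left_inv c
  ae_right_inv := Measure.ae_smul_measure h.ae_right_inv c

theorem of_map_eq [MeasurableEq β] (hf : Measurable f) (hg : Measurable g) (hmap : μ.map f = ν)
    (hinv : ∀ᵐ x ∂μ, g (f x) = x) : IsModZeroEquiv μ ν f g where
  measurable := hf
  measurable_inv := hg
  map_eq := hmap
  map_inv_eq := by
    rw [← hmap, Measure.map_map hg hf]
    exact (Measure.map_congr hinv).trans Measure.map_id
  ae_left_inv := hinv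
  ae_right_inv := by
    rw [← hmap]
    refine (ae_map_iff hf.aemeasurable (measurableSet_eq_fun (hf.comp hg) measurable_id)).2 ?_
    filter_upwards [hinv] with x hx using congrArg f hx

end IsModZeroEquiv

theorem _root_.MeasurableEquiv.isModZeroEquiv (e : α ≃ᵐ β) (μ : Measure α) :
    IsModZeroEquiv μ (μ.map e) e e.symm :=
  ⟨e.measurable, e.symm.measurable, rfl, e.map_symm_map, by simp, by simp⟩

end MeasureTheory

namespace ProbabilityTheory

noncomputable def quantile (ρ : Measure ℝ) (u : ℝ) : ℝ :=
  if u ∈ Ioo 0 1 then sInf {x | u ≤ cdf ρ x} else 0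

variable (ρ : Measure ℝ) [IsProbabilityMeasure ρ] [NullSingletonClass ρ] {u : ℝ}

theorem continuous_cdf : Continuous (cdf ρ) := by
  refine continuous_iff_continuousAt.2 fun a => continuousAt_iff_continuous_left_right.2
    ⟨?_, (cdf ρ).right_continuous a⟩
  have hleft : Function.leftLim (cdf ρ) a = cdf ρ a := by
    have h := (cdf ρ).measure_singleton a
    rw [measure_cdf, measure_singleton, eq_comm, ENNReal.ofReal_eq_zero, sub_nonpos] at h
    exact le_antisymm ((monotone_cdf ρ).leftLim_le le_rfl) h
  have h := (monotone_cdf ρ).tendsto_leftLim a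
  rw [hleft] at h
  exact continuousWithinAt_Iio_iff_Iic.1 h

theorem quantile_le_iff (hu : u ∈ Ioo 0 1) {x : ℝ} : quantile ρ u ≤ x ↔ u ≤ cdf ρ x := by
  obtain ⟨b, hb⟩ := eventually_atBot.1 ((tendsto_cdf_atBot ρ).eventually (gt_mem_nhds hu.1))
  obtain ⟨c, hc⟩ := eventually_atTop.1 ((tendsto_cdf_atTop ρ).eventually (lt_mem_nhds hu.2))
  have hbdd : BddBelow {x | u ≤ cdf ρ x} :=
    ⟨b, fun x hx => le_of_not_gt fun hxb => (hb x hxb.le).not_ge hx⟩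
  have hmem : u ≤ cdf ρ (quantile ρ u) := by
    rw [quantile, if_pos hu]
    exact (isClosed_le continuous_const (continuous_cdf ρ)).csInf_mem
      ⟨c, (hc c le_rfl).le⟩ hbdd
  refine ⟨fun h => hmem.trans (monotone_cdf ρ h), fun h => ?_⟩
  rw [quantile, if_pos hu]
  exact csInf_le hbdd h

theorem cdf_quantile (hu : u ∈ Ioo 0 1) : cdf ρ (quantile ρ u) = u := by
  refine le_antisymm ?_ ((quantile_le_iff ρ hu).1 le_rfl)
  refine le_of_tendsto ((continuous_cdf ρ).continuousAt.tendsto.mono_left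
    (nhdsWithin_le_nhds (s := Iio (quantile ρ u)))) ?_
  filter_upwards [self_mem_nhdsWithin] with x hx
  exact (lt_of_not_ge fun h => (not_le.2 hx) ((quantile_le_iff ρ hu).2 h)).le

theorem measurable_quantile : Measurable (quantile ρ) := by
  refine measurable_of_restrict_of_restrict_compl (measurableSet_Ioo (a := 0) (b := 1))
    (measurable_of_Iic fun x => ?_) ?_
  · have : (Ioo 0 1).domRestrict (quantile ρ) ⁻¹' Iic x = Subtype.val ⁻¹' Iic (cdf ρ x) := by
      ext u
      exact quantile_le_iff ρ u.2
    rw [this]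
    exact measurable_subtype_coe measurableSet_Iic
  · have : (Ioo (0 : ℝ) 1)ᶜ.domRestrict (quantile ρ) = fun _ => 0 := by
      ext u
      exact if_neg u.2
    rw [this]
    exact measurable_const

theorem map_quantile : (volume.restrict (Ioo 0 1)).map (quantile ρ) = ρ := by
  refine Measure.ext_of_Iic _ _ fun x => ?_
  have hpre : quantile ρ ⁻¹' Iic x ∩ Ioo 0 1 = Ioo 0 1 ∩ Iic (cdf ρ x) := by
    ext u
    exact ⟨fun h => ⟨h.2, (quantile_le_iff ρ h.2).1 h.1⟩,
      fun h => ⟨(quantile_le_iff ρ h.1).2 h.2, h.1⟩⟩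
  rw [Measure.map_apply (measurable_quantile ρ) measurableSet_Iic,
    Measure.restrict_apply (measurable_quantile ρ measurableSet_Iic), hpre, ← ofReal_cdf,
    measure_congr ((Ioo_ae_eq_Ioc (μ := volume)).inter (ae_eq_refl (Iic (cdf ρ x)))),
    Ioc_inter_Iic, min_eq_right (cdf_le_one ρ x), Real.volume_Ioc, sub_zero]

theorem isModZeroEquiv_quantile_cdf :
    IsModZeroEquiv (volume.restrict (Ioo 0 1)) ρ (quantile ρ) (cdf ρ) :=
  .of_map_eq (measurable_quantile ρ) (monotone_cdf ρ).measurable (map_quantile ρ)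
    (ae_restrict_of_forall_mem measurableSet_Ioo fun _ hu => cdf_quantile ρ hu)

end ProbabilityTheory

namespace MeasureTheory

section StandardBorel

variable {α β : Type*} [MeasurableSpace α] [StandardBorelSpace α]
  [MeasurableSpace β] [StandardBorelSpace β]

theorem exists_isModZeroEquiv_volume_Ioo [Uncountable α] (μ : Measure α) [IsProbabilityMeasure μ]
    [NullSingletonClass μ] : ∃ f g, IsModZeroEquiv μ (volume.restrict (Ioo (0 : ℝ) 1)) f g := by
  let e : α ≃ᵐ ℝ := PolishSpace.measurableEquivOfNotCountable not_countable not_countable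
  have : IsProbabilityMeasure (μ.map e) :=
    Measure.isProbabilityMeasure_map e.measurable.aemeasurable
  have : NullSingletonClass (μ.map e) := ⟨fun x => by simp [e.map_apply, ← e.image_symm]⟩
  exact ⟨_, _, (e.isModZeroEquiv μ).trans (isModZeroEquiv_quantile_cdf (μ.map e)).symm⟩

theorem exists_isModZeroEquiv_smul_volume_Ioo [Uncountable α] (μ : Measure α) [IsFiniteMeasure μ]
    [NullSingletonClass μ] :
    ∃ f g, IsModZeroEquiv μ (μ univ • volume.restrict (Ioo (0 : ℝ) 1)) f g := by
  rcases eq_zero_or_neZero μ with rfl | hμ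
  · let e : α ≃ᵐ ℝ := PolishSpace.measurableEquivOfNotCountable not_countable not_countable
    exact ⟨e, e.symm, by simpa using e.isModZeroEquiv 0⟩
  have : NullSingletonClass ((μ univ)⁻¹ • μ) := ⟨fun x => by simp⟩
  obtain ⟨f, g, h⟩ := exists_isModZeroEquiv_volume_Ioo ((μ univ)⁻¹ • μ)
  refine ⟨f, g, ?_⟩
  simpa [smul_smul, ENNReal.mul_inv_cancel (NeZero.ne (μ univ)) (measure_ne_top μ univ)]
    using h.smul (μ univ)

theorem exists_isModZeroEquiv [Uncountable α] [Uncountable β] (μ : Measure α) (ν : Measure β)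
    [IsFiniteMeasure μ] [NullSingletonClass μ] [IsFiniteMeasure ν] [NullSingletonClass ν]
    (h : μ univ = ν univ) : ∃ f g, IsModZeroEquiv μ ν f g := by
  obtain ⟨f, g, hμ⟩ := exists_isModZeroEquiv_smul_volume_Ioo μ
  obtain ⟨f', g', hν⟩ := exists_isModZeroEquiv_smul_volume_Ioo ν
  rw [h] at hμ
  exact ⟨_, _, hμ.trans hν.symm⟩

theorem exists_measurableEquiv_eqOn {f : α → β} {s : Set α} (hs : MeasurableSet s)
    (hf : Measurable f) (hinj : InjOn f s) (hsc : ¬ sᶜ.Countable) (himc : ¬ (f '' s)ᶜ.Countable) :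
    ∃ Φ : α ≃ᵐ β, EqOn Φ f s := by
  classical
  have : StandardBorelSpace s := hs.standardBorel
  have hg : MeasurableEmbedding (s.domRestrict f) :=
    (hf.comp measurable_subtype_coe).measurableEmbedding hinj.injective
  have : StandardBorelSpace ↥sᶜ := hs.compl.standardBorel
  have : StandardBorelSpace ↥(range (s.domRestrict f))ᶜ :=
    hg.measurableSet_range.compl.standardBorel
  let e : ↥sᶜ ≃ᵐ ↥(range (s.domRestrict f))ᶜ := PolishSpace.measurableEquivOfNotCountable
    (by rwa [countable_coe_iff]) (by rwa [countable_coe_iff, range_domRestrict])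
  refine ⟨(MeasurableEquiv.sumCompl hs).symm.trans
    ((hg.equivRange.sumCongr e).trans (MeasurableEquiv.sumCompl hg.measurableSet_range)),
    fun x hx => ?_⟩
  change Equiv.sumCompl _ (hg.equivRange.sumCongr e ((Equiv.sumCompl (· ∈ s)).symm x)) = f x
  rw [Equiv.sumCompl_symm_apply_of_pos hx]
  exact congrArg Subtype.val (hg.equivRange_apply ⟨x, hx⟩)

theorem exists_measurableEquiv_ae_eq {μ : Measure α} {f : α → β} (hf : Measurable f)
    {s : Set α} (hs : s ∈ ae μ) (hinj : InjOn f s)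
    (hnull : ∀ t, MeasurableSet t → μ.map f tᶜ = 0 →
      ∃ v ⊆ t, MeasurableSet v ∧ μ.map f v = 0 ∧ ¬ v.Countable) :
    ∃ Φ : α ≃ᵐ β, Φ =ᵐ[μ] f := by
  set E := (toMeasurable μ sᶜ)ᶜ
  have hE : MeasurableSet E := (measurableSet_toMeasurable μ _).compl
  have hEs : E ⊆ s := compl_subset_comm.1 (subset_toMeasurable μ _)
  have hEnull : μ Eᶜ = 0 := by rw [compl_compl, measure_toMeasurable, ← mem_ae_iff.1 hs]
  have hB : MeasurableSet (f '' E) := hE.image_of_measurable_injOn hf (hinj.mono hEs)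
  obtain ⟨v, hvB, hv, hvnull, hvunc⟩ := hnull _ hB <| by
    rw [Measure.map_apply hf hB.compl]
    exact measure_mono_null (fun x hx hxE => hx (mem_image_of_mem f hxE)) hEnull
  rw [Measure.map_apply hf hv] at hvnull
  -- `f` maps the removed null set `E ∩ f ⁻¹' v` onto the uncountable `v ⊆ f '' E`
  have hcompl : ¬ (E \ f ⁻¹' v)ᶜ.Countable := fun hc => hvunc <| by
    rw [← inter_eq_right.2 hvB, ← image_inter_preimage]
    exact (hc.mono fun x hx hx' => hx'.2 hx.2).image f
  have himcompl : ¬ (f '' (E \ f ⁻¹' v))ᶜ.Countable := by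
    rw [image_sdiff_preimage]
    exact fun hc => hvunc (hc.mono fun y hy h => (mem_sdiff y).1 h |>.2 hy)
  obtain ⟨Φ, hΦ⟩ := exists_measurableEquiv_eqOn (hE.diff (hf hv)) hf
    (hinj.mono (sdiff_subset.trans hEs)) hcompl himcompl
  refine ⟨Φ, eventuallyEq_of_mem (mem_ae_iff.2 ?_) hΦ⟩
  rw [Set.compl_sdiff]
  exact measure_union_null hvnull hEnull

end StandardBorel

theorem exists_uncountable_null_subset_prod {α β : Type*} [MeasurableSpace α]
    [MeasurableSingletonClass α] [MeasurableSpace β] {μ : Measure α} {ν : Measure β}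
    [NeZero μ] [NullSingletonClass μ] [SFinite ν] [NeZero ν] [NullSingletonClass ν]
    {t : Set (α × β)} (ht : MeasurableSet t) (htc : μ.prod ν tᶜ = 0) :
    ∃ v ⊆ t, MeasurableSet v ∧ μ.prod ν v = 0 ∧ ¬ v.Countable := by
  obtain ⟨x, hx⟩ := (Measure.ae_ae_of_ae_prod (mem_ae_iff.2 htc)).exists
  refine ⟨t ∩ {x} ×ˢ univ, inter_subset_left,
    ht.inter ((measurableSet_singleton x).prod .univ),
    measure_mono_null inter_subset_right (by rw [Measure.prod_prod, measure_singleton, zero_mul]),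
    fun hc => NeZero.ne ν (Measure.measure_univ_eq_zero.1 ?_)⟩
  -- the section of `t` at `x` is `ν`-conull, hence uncountable
  have hsec : {y | (x, y) ∈ t}.Countable :=
    (hc.preimage (Prod.mk_right_injective (a := x))).mono fun y hy => by simpa using hy
  rw [← union_compl_self {y | (x, y) ∈ t}]
  exact measure_union_null (hsec.measure_zero ν) hx

section Partition

variable {α β : Type*} [MeasurableSpace α] [MeasurableSpace β] {μ : Measure α} {κ : Measure β}
  {𝓜 : Set (Set α)}

theorem IsModZeroEquiv.ae_fst_mem {M : Set α} {f : α → α × β} {g : α × β → α}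
    (h : IsModZeroEquiv (μ.restrict M) ((μ.restrict M).prod κ) f g) (hM : MeasurableSet M) :
    ∀ᵐ x ∂μ.restrict M, (f x).1 ∈ M :=
  ae_of_ae_map h.measurable.aemeasurable <| h.map_eq ▸
    Measure.quasiMeasurePreserving_fst.ae (ae_restrict_mem hM)

theorem exists_measurable_eqOn_of_pairwiseDisjoint {γ : Type*} [MeasurableSpace γ]
    (h𝓜count : 𝓜.Countable) (h𝓜ne : 𝓜.Nonempty) (h𝓜meas : ∀ M ∈ 𝓜, MeasurableSet M)
    (h𝓜disj : 𝓜.PairwiseDisjoint id) {ψ : Set α → α → γ} (hψ : ∀ M ∈ 𝓜, Measurable (ψ M)) :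
    ∃ Ψ, Measurable Ψ ∧ ∀ M ∈ 𝓜, EqOn Ψ (ψ M) M := by
  have := h𝓜count.to_subtype
  have := h𝓜ne.to_subtype
  obtain ⟨Ψ, hΨ, hΨψ⟩ := exists_measurable_piecewise (fun M : 𝓜 => (M : Set α))
    (fun M => h𝓜meas M M.2) (fun M => ψ M) (fun M => hψ M M.2)
    fun M N hMN x hx =>
      ((h𝓜disj M.2 N.2 (Subtype.coe_ne_coe.2 hMN)).notMem_of_mem_left hx.1 hx.2).elim
  exact ⟨Ψ, hΨ, fun M hM => hΨψ ⟨M, hM⟩⟩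

theorem exists_mem_ae_injOn_of_partition (h𝓜count : 𝓜.Countable)
    (h𝓜meas : ∀ M ∈ 𝓜, MeasurableSet M) (h𝓜cover : ⋃₀ 𝓜 = univ) (h𝓜disj : 𝓜.PairwiseDisjoint id)
    {Ψ : α → α × β} {ψ : Set α → α → α × β} {θ : Set α → α × β → α}
    (hΨ : ∀ M ∈ 𝓜, EqOn Ψ (ψ M) M)
    (hψθ : ∀ M ∈ 𝓜, IsModZeroEquiv (μ.restrict M) ((μ.restrict M).prod κ) (ψ M) (θ M)) :
    ∃ s ∈ ae μ, InjOn Ψ s := by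
  have := h𝓜count.to_subtype
  have hgood : ∀ᵐ x ∂μ, ∀ M : 𝓜, x ∈ (M : Set α) → (Ψ x).1 ∈ (M : Set α) ∧ θ M (Ψ x) = x := by
    refine ae_all_iff.2 fun ⟨M, hM⟩ => (ae_restrict_iff' (h𝓜meas M hM)).1 ?_
    filter_upwards [ae_restrict_mem (h𝓜meas M hM), (hψθ M hM).ae_fst_mem (h𝓜meas M hM),
      (hψθ M hM).ae_left_inv] with x hx hfst hinv
    rw [hΨ M hM hx]
    exact ⟨hfst, hinv⟩
  refine ⟨_, hgood, fun x hx y hy hxy => ?_⟩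
  obtain ⟨M, hM, hxM⟩ : x ∈ ⋃₀ 𝓜 := h𝓜cover ▸ mem_univ x
  obtain ⟨N, hN, hyN⟩ : y ∈ ⋃₀ 𝓜 := h𝓜cover ▸ mem_univ y
  obtain ⟨hxM', hx⟩ := hx ⟨M, hM⟩ hxM
  obtain ⟨hyN', hy⟩ := hy ⟨N, hN⟩ hyN
  obtain rfl : M = N :=
    h𝓜disj.elim hM hN (not_disjoint_iff.2 ⟨(Ψ x).1, hxM', hxy ▸ hyN'⟩)
  rw [← hx, hxy, hy]

theorem map_eq_prod_of_partition [SFinite κ] (h𝓜count : 𝓜.Countable)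
    (h𝓜meas : ∀ M ∈ 𝓜, MeasurableSet M) (h𝓜cover : ⋃₀ 𝓜 = univ) (h𝓜disj : 𝓜.PairwiseDisjoint id)
    {Ψ : α → α × β} (hΨ : Measurable Ψ)
    (h : ∀ M ∈ 𝓜, (μ.restrict M).map Ψ = (μ.restrict M).prod κ) : μ.map Ψ = μ.prod κ := by
  have := h𝓜count.to_subtype
  have hsum : μ = Measure.sum fun M : 𝓜 => μ.restrict M := by
    rw [← Measure.restrict_iUnion (s := fun M : 𝓜 => (M : Set α))
      (fun M N hMN => h𝓜disj M.2 N.2 (Subtype.coe_ne_coe.2 hMN)) (fun M => h𝓜meas M M.2),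
      ← sUnion_eq_iUnion, h𝓜cover, Measure.restrict_univ]
  rw [hsum, Measure.map_sum hΨ.aemeasurable, Measure.prod_sum_left]
  exact congrArg Measure.sum (funext fun M => h M M.2)

end Partition

end MeasureTheory

/-- Let `X` be an uncountable Polish space, `𝓜` an at most countable
partition of `X` into Borel sets, and `μ` an atomless Borel probability measure on `X`.
Then there is a Borel isomorphism `Φ : X → X × [0,1]` with
`Φ_* (μ|M) = (μ|M) ⊗ λ` for every `M ∈ 𝓜`. -/
theorem exists_partition_compatible_borel_isomorphism
    {X : Type*} [TopologicalSpace X] [PolishSpace X] [MeasurableSpace X] [BorelSpace X]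
    [Uncountable X]
    (𝓜 : Set (Set X)) (h𝓜count : 𝓜.Countable)
    (h𝓜meas : ∀ M ∈ 𝓜, MeasurableSet M)
    (h𝓜cover : ⋃₀ 𝓜 = Set.univ)
    (h𝓜disj : 𝓜.PairwiseDisjoint id)
    (μ : Measure X) [IsProbabilityMeasure μ] [NullSingletonClass μ] :
    ∃ Φ : X → X × unitInterval, Measurable Φ ∧ Function.Bijective Φ ∧
      ∀ M ∈ 𝓜, (μ.restrict M).map Φ = (μ.restrict M).prod (volume : Measure unitInterval) := by
  choose ψ θ hψθ using fun M : Set X => exists_isModZeroEquiv (μ.restrict M)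
    ((μ.restrict M).prod (volume : Measure unitInterval)) (by simp [← univ_prod_univ])
  obtain ⟨Ψ, hΨ, hΨψ⟩ := exists_measurable_eqOn_of_pairwiseDisjoint h𝓜count
    (Nonempty.of_sUnion_eq_univ h𝓜cover) h𝓜meas h𝓜disj fun M _ => (hψθ M).measurable
  have hΨM : ∀ M ∈ 𝓜, (μ.restrict M).map Ψ = (μ.restrict M).prod volume := fun M hM => by
    rw [Measure.map_congr (ae_restrict_of_forall_mem (h𝓜meas M hM) (hΨψ M hM)), (hψθ M).map_eq]
  obtain ⟨s, hs, hinj⟩ := exists_mem_ae_injOn_of_partition h𝓜count h𝓜meas h𝓜cover h𝓜disj hΨψ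
    fun M _ => hψθ M
  obtain ⟨Φ, hΦ⟩ := exists_measurableEquiv_ae_eq hΨ hs hinj <| by
    rw [map_eq_prod_of_partition h𝓜count h𝓜meas h𝓜cover h𝓜disj hΨ hΨM]
    exact fun t ht htc => exists_uncountable_null_subset_prod ht htc
  refine ⟨Φ, Φ.measurable, Φ.bijective, fun M hM => ?_⟩
  rw [Measure.map_congr (ae_restrict_of_ae hΦ), hΨM M hM]
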